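/- Let k ≥ 2 and let −d ≤ d_1* < … < d_k* ≤ d with minimal gap d_min*, and a_1*, …, a_k* real with |a_j*| ≥ m > 0. Let −d ≤ d_1 < … < d_k ≤ d be any nodes and a ∈ ℝ^k any coefficients such that ‖A·a − A*·a*‖₂ < σ, where A and A* are the (2k)×k matrices with entries d_j^(i−1) and (d_j*)^(i−1), i = 1,…,2k, respectively. Then the vector η with components η_j = Π_{q=1}^{k}(d_j* − d_q) satisfies ‖η‖_∞ < (1+d)^(2k−1)·σ / (ζ(k)·(d_min*)^(k−1)·m), where ζ(k) = (k/2)!·((k−2)/2)! for even k and (((k−1)/2)!)² for odd k. -/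

import Mathlib

open Matrix

/-- ζ(k) = (k/2)!·((k-2)/2)! for even k and (((k-1)/2)!)² for odd k. -/
noncomputable def paperZeta (n : ℕ) : ℝ :=
  if Even n then (Nat.factorial (n / 2) : ℝ) * (Nat.factorial ((n - 2) / 2) : ℝ)
  else ((Nat.factorial ((n - 1) / 2) : ℝ)) ^ 2

/-!
Fix `j`. The polynomial `R = ∏_q (X - d_q) · ∏_{i ≠ j} (X - d*_i)` has degree `2k - 1`, so its
coefficient vector `c` pairs with the columns of the two Vandermonde matrices by evaluation.
Since `R` vanishes at every `d_q` and at every `d*_i` with `i ≠ j`,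
`c ⬝ (A a - A* a*) = -a*_j R(d*_j) = -a*_j η_j ∏_{i ≠ j} (d*_j - d*_i)`.
The left side is at most `‖c‖₁ σ ≤ (1 + d)^(2k-1) σ`, while the nodes `d*` are `d_min*`-separated,
so `∏_{i ≠ j} |d*_j - d*_i| ≥ j! (k-1-j)! (d_min*)^(k-1) ≥ ζ(k) (d_min*)^(k-1)`.
-/

open Polynomial Finset Nat

namespace Polynomial

variable {R : Type*}

theorem sum_range_norm_coeff_X_sub_C_mul_le [SeminormedRing R] (a : R) (p : R[X]) {B : ℝ}
    (hp : ∀ N, ∑ i ∈ range N, ‖p.coeff i‖ ≤ B) (N : ℕ) :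
    ∑ i ∈ range N, ‖((X - C a) * p).coeff i‖ ≤ (1 + ‖a‖) * B := by
  have hXp : ∑ i ∈ range N, ‖(X * p).coeff i‖ ≤ B := by
    cases N with
    | zero => simpa using hp 0
    | succ N => simpa [sum_range_succ', coeff_X_mul] using hp N
  calc ∑ i ∈ range N, ‖((X - C a) * p).coeff i‖
      ≤ ∑ i ∈ range N, (‖(X * p).coeff i‖ + ‖a‖ * ‖p.coeff i‖) := by
        refine sum_le_sum fun i _ => ?_
        rw [sub_mul, coeff_sub, coeff_C_mul]
        exact (norm_sub_le _ _).trans (by gcongr; exact norm_mul_le _ _)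
    _ ≤ B + ‖a‖ * B := by
        rw [sum_add_distrib, ← mul_sum]
        gcongr
        exact hp N
    _ = (1 + ‖a‖) * B := by ring

theorem sum_range_norm_coeff_prod_X_sub_C_le [SeminormedCommRing R] [NormOneClass R]
    {ι : Type*} (s : Finset ι) (r : ι → R) (N : ℕ) :
    ∑ i ∈ range N, ‖(∏ t ∈ s, (X - C (r t))).coeff i‖ ≤ ∏ t ∈ s, (1 + ‖r t‖) := by
  classical
  induction s using Finset.induction generalizing N with
  | empty =>
    cases N with
    | zero => simp
    | succ N => simp [sum_range_succ', coeff_one]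
  | insert t s ht ih =>
    rw [prod_insert ht, prod_insert ht]
    exact sum_range_norm_coeff_X_sub_C_mul_le _ _ ih N

end Polynomial

-- The paper's `A`, whose row `i = 1, …, n` is `(x_l^(i-1))_l`; rows are indexed from `0` here.
def powerMatrix {ι R : Type*} [Monoid R] (n : ℕ) (x : ι → R) : Matrix (Fin n) ι R :=
  Matrix.of fun i l => x l ^ (i : ℕ)

theorem Polynomial.vecMul_powerMatrix {ι R : Type*} [Fintype ι] [CommSemiring R] {n : ℕ}
    {p : R[X]} (hp : p.natDegree < n) (x : ι → R) :
    (fun i : Fin n => p.coeff i) ᵥ* powerMatrix n x = fun l => p.eval (x l) := by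
  funext l
  simp only [vecMul, dotProduct, powerMatrix, of_apply, eval_eq_sum_range' hp]
  exact Fin.sum_univ_eq_sum_range (fun i => p.coeff i * x l ^ i) n

theorem abs_dotProduct_le_sum_abs_mul_sqrt {ι : Type*} [Fintype ι] (v w : ι → ℝ) :
    |v ⬝ᵥ w| ≤ (∑ i, |v i|) * √(∑ i, w i ^ 2) := by
  have hw : ∀ i, |w i| ≤ √(∑ i, w i ^ 2) := fun i =>
    Real.abs_le_sqrt (single_le_sum (fun j _ => sq_nonneg (w j)) (mem_univ i))
  calc |v ⬝ᵥ w| ≤ ∑ i, |v i| * |w i| := by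
        simpa only [dotProduct, abs_mul] using abs_sum_le_sum_abs (fun i => v i * w i) univ
    _ ≤ ∑ i, |v i| * √(∑ i, w i ^ 2) := by gcongr with i; exact hw i
    _ = (∑ i, |v i|) * √(∑ i, w i ^ 2) := by rw [sum_mul]

theorem abs_eval_mul_le_of_eval_eq_zero {ι κ : Type*} [Fintype ι] [Fintype κ] {n : ℕ}
    {p : ℝ[X]} (hp : p.natDegree < n) {x a : ι → ℝ} {y b : κ → ℝ} {j : κ}
    (hx : ∀ i, p.eval (x i) = 0) (hy : ∀ l, l ≠ j → p.eval (y l) = 0) :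
    |p.eval (y j) * b j| ≤ (∑ i ∈ range n, |p.coeff i|) *
      √(∑ i, ((powerMatrix n x *ᵥ a - powerMatrix n y *ᵥ b) i) ^ 2) := by
  have hpair : (fun i : Fin n => p.coeff i) ⬝ᵥ (powerMatrix n x *ᵥ a - powerMatrix n y *ᵥ b) =
      -(p.eval (y j) * b j) := by
    rw [dotProduct_sub, dotProduct_mulVec, dotProduct_mulVec, p.vecMul_powerMatrix hp,
      p.vecMul_powerMatrix hp]
    simp only [dotProduct, hx, zero_mul, sum_const_zero, zero_sub]
    rw [sum_eq_single j (fun l _ hl => by rw [hy l hl, zero_mul]) (by simp)]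
  rw [← abs_neg, ← hpair, ← Fin.sum_univ_eq_sum_range (fun i => |p.coeff i|)]
  exact abs_dotProduct_le_sum_abs_mul_sqrt _ _

theorem Nat.factorial_half_mul_factorial_le (n j : ℕ) (hj : j ≤ n) :
    (n / 2)! * (n - n / 2)! ≤ j ! * (n - j)! := by
  refine Nat.le_of_mul_le_mul_left ?_ (choose_pos (div_le_self n 2))
  calc n.choose (n / 2) * ((n / 2)! * (n - n / 2)!)
      = n ! := by rw [← mul_assoc, choose_mul_factorial_mul_factorial (div_le_self n 2)]
    _ = n.choose j * (j ! * (n - j)!) := by rw [← mul_assoc, choose_mul_factorial_mul_factorial hj]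
    _ ≤ n.choose (n / 2) * (j ! * (n - j)!) := Nat.mul_le_mul_right _ (choose_le_middle j n)

theorem paperZeta_eq (k : ℕ) :
    paperZeta k = ((k - 1) / 2)! * ((k - 1 - (k - 1) / 2)! : ℝ) := by
  unfold paperZeta
  split_ifs with h
  · obtain ⟨t, rfl⟩ := h
    rw [show (t + t - 1) / 2 = (t + t - 2) / 2 by omega,
      show t + t - 1 - (t + t - 2) / 2 = (t + t) / 2 by omega, mul_comm]
  · obtain ⟨t, rfl⟩ := Nat.not_even_iff_odd.mp h
    rw [show 2 * t + 1 - 1 - (2 * t + 1 - 1) / 2 = (2 * t + 1 - 1) / 2 by omega, sq]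

theorem paperZeta_pos (k : ℕ) : 0 < paperZeta k := by
  rw [paperZeta_eq]
  positivity

theorem Nat.prod_range_ite_dist (j m : ℕ) :
    ∏ i ∈ range (j + 1 + m), (if i = j then 1 else Nat.dist j i) = j ! * m ! := by
  rw [prod_range_add, prod_range_succ, if_pos rfl, mul_one, ← descFactorial_self,
    descFactorial_eq_prod_range, ← prod_range_add_one_eq_factorial]
  congr 1 <;> refine prod_congr rfl fun i hi => ?_ <;> rw [mem_range] at hi
  · rw [if_neg (by omega), dist_eq_sub_of_le_right hi.le]
  · rw [if_neg (by omega), dist_eq_sub_of_le (by omega)]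
    omega

theorem Fin.prod_erase_dist (k : ℕ) (j : Fin k) :
    ∏ i ∈ univ.erase j, Nat.dist j i = (j : ℕ)! * (k - 1 - j)! := by
  obtain ⟨m, hm⟩ : ∃ m, k = j + 1 + m := ⟨k - 1 - j, by omega⟩
  rw [show k - 1 - j = m by omega, ← Nat.prod_range_ite_dist, ← hm,
    ← Fin.prod_univ_eq_prod_range (fun i => if i = (j : ℕ) then 1 else Nat.dist j i),
    ← filter_ne', prod_filter]
  simp only [ne_eq, ite_not, Fin.val_inj]

section Separated

variable {k : ℕ} {x : Fin k → ℝ} {δ : ℝ}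

theorem Fin.cast_sub_mul_le_sub (hx : StrictMono x) (hgap : ∀ i j, i ≠ j → δ ≤ |x i - x j|)
    {i j : Fin k} (hij : i ≤ j) : ((j - i : ℕ) : ℝ) * δ ≤ x j - x i := by
  obtain ⟨n, hn⟩ : ∃ n, (j : ℕ) = i + n := ⟨j - i, by omega⟩
  rw [hn, Nat.add_sub_cancel_left]
  clear hij
  induction n generalizing j with
  | zero => simp [Fin.ext hn]
  | succ n ih =>
    let j' : Fin k := ⟨i + n, by omega⟩
    have hj' : j' < j := Fin.lt_def.mpr (by simp only [j']; omega)
    have hstep : δ ≤ x j - x j' := by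
      simpa [abs_of_pos (sub_pos.mpr (hx hj'))] using hgap j j' hj'.ne'
    have := ih (j := j') rfl
    push_cast
    linarith

theorem Fin.natDist_mul_le_abs_sub (hx : StrictMono x) (hgap : ∀ i j, i ≠ j → δ ≤ |x i - x j|)
    (i j : Fin k) : (Nat.dist i j : ℝ) * δ ≤ |x i - x j| := by
  rcases le_total i j with h | h
  · rw [dist_eq_sub_of_le h, abs_sub_comm, abs_of_nonneg (sub_nonneg.mpr (hx.monotone h))]
    exact cast_sub_mul_le_sub hx hgap h
  · rw [dist_eq_sub_of_le_right h, abs_of_nonneg (sub_nonneg.mpr (hx.monotone h))]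
    exact cast_sub_mul_le_sub hx hgap h

theorem paperZeta_mul_pow_le_prod_abs_sub (hx : StrictMono x) (hδ : 0 ≤ δ)
    (hgap : ∀ i j, i ≠ j → δ ≤ |x i - x j|) (j : Fin k) :
    paperZeta k * δ ^ (k - 1) ≤ ∏ i ∈ univ.erase j, |x j - x i| :=
  calc paperZeta k * δ ^ (k - 1)
      ≤ ((∏ i ∈ univ.erase j, Nat.dist j i : ℕ) : ℝ) * δ ^ (k - 1) := by
        gcongr
        rw [paperZeta_eq, Fin.prod_erase_dist]
        exact_mod_cast factorial_half_mul_factorial_le (k - 1) j (by omega)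
    _ = ∏ i ∈ univ.erase j, (Nat.dist j i : ℝ) * δ := by
        rw [prod_mul_distrib, prod_const, card_erase_of_mem (mem_univ j), Finset.card_univ,
          Fintype.card_fin, Nat.cast_prod]
    _ ≤ ∏ i ∈ univ.erase j, |x j - x i| :=
        prod_le_prod (fun _ _ => by positivity) fun i _ => Fin.natDist_mul_le_abs_sub hx hgap j i

end Separated

theorem sum_range_abs_coeff_prod_X_sub_C_le_pow {ι : Type*} (s : Finset ι) (r : ι → ℝ) {d : ℝ}
    (hr : ∀ t ∈ s, |r t| ≤ d) (N : ℕ) :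
    ∑ i ∈ range N, |(∏ t ∈ s, (X - C (r t))).coeff i| ≤ (1 + d) ^ #s := by
  have h := sum_range_norm_coeff_prod_X_sub_C_le s r N
  simp only [Real.norm_eq_abs] at h
  rw [← prod_const]
  exact h.trans (prod_le_prod (fun _ _ => by positivity) fun t ht => by linarith [hr t ht])

theorem abs_prod_sub_mul_le_pow_mul_sqrt {k : ℕ} {d : ℝ} {x y : Fin k → ℝ}
    (hx : ∀ q, |x q| ≤ d) (hy : ∀ i, |y i| ≤ d) (a b : Fin k → ℝ) (j : Fin k) :
    |∏ q, (y j - x q)| * ((∏ i ∈ univ.erase j, |y j - y i|) * |b j|) ≤ (1 + d) ^ (2 * k - 1) *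
      √(∑ i, ((powerMatrix (2 * k) x *ᵥ a - powerMatrix (2 * k) y *ᵥ b) i) ^ 2) := by
  have hk : 0 < k := j.pos
  set s : Finset (Fin k ⊕ Fin k) := univ.disjSum (univ.erase j)
  set R : ℝ[X] := ∏ t ∈ s, (X - C (Sum.elim x y t))
  have hR : ∀ z, R.eval z = (∏ q, (z - x q)) * ∏ i ∈ univ.erase j, (z - y i) := by
    simp [R, s, eval_prod, prod_disjSum]
  have hcard : #s = 2 * k - 1 := by
    simp only [s, card_disjSum, card_erase_of_mem (mem_univ j), Finset.card_univ,
      Fintype.card_fin]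
    omega
  have hR_coeff : ∑ i ∈ range (2 * k), |R.coeff i| ≤ (1 + d) ^ (2 * k - 1) := by
    rw [← hcard]
    refine sum_range_abs_coeff_prod_X_sub_C_le_pow s _ (fun t _ => ?_) _
    rcases t with q | i
    exacts [hx q, hy i]
  have hR_eval := abs_eval_mul_le_of_eval_eq_zero (p := R) (n := 2 * k)
    (x := x) (a := a) (y := y) (b := b) (j := j)
    (by rw [natDegree_finsetProd_X_sub_C_eq_card, hcard]; omega)
    (fun q => by simp [hR, prod_eq_zero (mem_univ q)])
    (fun l hl => by simp [hR, prod_eq_zero (mem_erase.mpr ⟨hl, mem_univ l⟩)])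
  rw [hR, abs_mul, abs_mul, abs_prod (univ.erase j), mul_assoc] at hR_eval
  exact hR_eval.trans (by gcongr)

/-- Stability of nonlinear approximation in Vandermonde space: if two sparse combinations of
Vandermonde vectors of length `2k` are `σ`-close in `ℓ²`, then each true node `d*_j` has a
small product of distances to the recovered nodes `d_1,…,d_k`. -/
theorem stmt_18 (k : ℕ) (hk : 2 ≤ k) (d : ℝ) (dstar : Fin k → ℝ) (hmonos : StrictMono dstar)
    (hinstar : ∀ j, -d ≤ dstar j ∧ dstar j ≤ d) (dmin : ℝ)
    (hdmin : IsLeast {x : ℝ | ∃ i j : Fin k, i ≠ j ∧ x = |dstar i - dstar j|} dmin)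
    (m : ℝ) (hm : 0 < m) (astar : Fin k → ℝ) (ha : ∀ j, m ≤ |astar j|)
    (dd : Fin k → ℝ) (hin : ∀ p, -d ≤ dd p ∧ dd p ≤ d)
    (a : Fin k → ℝ) (σ : ℝ)
    (hclose : Real.sqrt (∑ i : Fin (2 * k),
        (((Matrix.of fun (i : Fin (2 * k)) (p : Fin k) => dd p ^ (i : ℕ)).mulVec a -
          (Matrix.of fun (i : Fin (2 * k)) (j : Fin k) =>
            dstar j ^ (i : ℕ)).mulVec astar) i) ^ 2) < σ) :
    Finset.univ.sup' ⟨(⟨0, by omega⟩ : Fin k), Finset.mem_univ _⟩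
        (fun j => |∏ q : Fin k, (dstar j - dd q)|) <
      (1 + d) ^ (2 * k - 1) * σ / (paperZeta k * dmin ^ (k - 1) * m) := by
  obtain ⟨⟨i₀, j₀, hij₀, rfl⟩, hgap⟩ := hdmin
  have hdmin_pos : 0 < |dstar i₀ - dstar j₀| :=
    abs_pos.mpr (sub_ne_zero.mpr (hmonos.injective.ne hij₀))
  have hζ := paperZeta_mul_pow_le_prod_abs_sub hmonos hdmin_pos.le
    (fun i j hij => hgap ⟨i, j, hij, rfl⟩)
  have hd : 0 ≤ d := by linarith [hinstar ⟨0, by omega⟩]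
  refine (sup'_lt_iff _).mpr fun j _ => ?_
  rw [lt_div_iff₀ (by have := paperZeta_pos k; positivity)]
  calc |∏ q, (dstar j - dd q)| * (paperZeta k * |dstar i₀ - dstar j₀| ^ (k - 1) * m)
      ≤ |∏ q, (dstar j - dd q)| * ((∏ i ∈ univ.erase j, |dstar j - dstar i|) * |astar j|) := by
        gcongr
        exacts [hζ j, ha j]
    _ ≤ (1 + d) ^ (2 * k - 1) *
          √(∑ i, ((powerMatrix (2 * k) dd *ᵥ a - powerMatrix (2 * k) dstar *ᵥ astar) i) ^ 2) :=
        abs_prod_sub_mul_le_pow_mul_sqrt (fun q => abs_le.mpr (hin q))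
          (fun i => abs_le.mpr (hinstar i)) a astar j
    _ < (1 + d) ^ (2 * k - 1) * σ := by gcongr; exact hclose
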